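/- arXiv:2308.14661 — 5 statements merged into one kernel-verified Lean document; each statement's English description precedes it below -/
import Mathlib

section
/- Let T be an essentially small monoidal triangulated category whose noncommutative Balmer spectrum Spc(T) is a noetherian topological space. Then the assignment Y ↦ T_Y = {t ∈ T : supp(t) ⊆ Y} is an inclusion-preserving bijection from the collection of all Thomason subsets of Spc(T) to the collection of all thick two-sided semiprime ideals of T, with inverse J ↦ supp(J) = ∪_{t ∈ J} supp(t). -/
open CategoryTheory CategoryTheory.Limits CategoryTheory.Pretriangulated
  CategoryTheory.MonoidalCategory TopologicalSpace ZeroObject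

universe v u

variable (C : Type u) [Category.{v} C] [HasZeroObject C] [Preadditive C]
  [HasShift C ℤ] [∀ n : ℤ, (shiftFunctor C n).Additive] [Pretriangulated C]
  [HasBinaryBiproducts C] [MonoidalCategory C] [EssentiallySmall.{v} C]
  [∀ X : C, (tensorLeft X).CommShift ℤ] [∀ X : C, (tensorRight X).CommShift ℤ]
  [∀ X : C, (tensorLeft X).IsTriangulated] [∀ X : C, (tensorRight X).IsTriangulated]

/-- A thick two-sided tensor ideal of a monoidal triangulated category:
a thick (triangulated, closed under direct summands) subcategory, closed under
left and right tensoring by arbitrary objects. -/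
structure ThickIdeal : Type (max u v) where
  carrier : Set C
  zero_mem : (0 : C) ∈ carrier
  iso_closed : ∀ {a b : C}, (a ≅ b) → a ∈ carrier → b ∈ carrier
  shift_mem : ∀ (a : C) (n : ℤ), a ∈ carrier → (a⟦n⟧ : C) ∈ carrier
  ext₂ : ∀ T : Triangle C, (T ∈ distTriang C) →
    T.obj₁ ∈ carrier → T.obj₃ ∈ carrier → T.obj₂ ∈ carrier
  summand_mem : ∀ a b : C, (a ⊞ b) ∈ carrier → a ∈ carrier
  tensor_left_mem : ∀ a x : C, a ∈ carrier → (x ⊗ a) ∈ carrier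
  tensor_right_mem : ∀ a x : C, a ∈ carrier → (a ⊗ x) ∈ carrier

namespace ThickIdeal

variable {C}

/-- A thick two-sided ideal is proper if it is not all of `C`. -/
def IsProper (P : ThickIdeal C) : Prop := P.carrier ≠ Set.univ

/-- A prime ideal: a proper thick two-sided ideal `P` such that `I ⊗ J ⊆ P`
implies `I ⊆ P` or `J ⊆ P` for all thick two-sided ideals `I`, `J`.
(Since `P` is a thick two-sided ideal, `I ⊗ J ⊆ P` is equivalent to all
elementwise tensor products lying in `P`.) -/
def IsPrime (P : ThickIdeal C) : Prop :=
  P.IsProper ∧ ∀ I J : ThickIdeal C,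
    (∀ i ∈ I.carrier, ∀ j ∈ J.carrier, (i ⊗ j) ∈ P.carrier) →
      I.carrier ⊆ P.carrier ∨ J.carrier ⊆ P.carrier

/-- A semiprime ideal: an intersection of prime ideals. -/
def IsSemiprime (J : ThickIdeal C) : Prop :=
  ∃ S : Set (ThickIdeal C), (∀ P ∈ S, P.IsPrime) ∧
    J.carrier = ⋂ P ∈ S, P.carrier

end ThickIdeal

/-- The noncommutative Balmer spectrum: the set of prime thick two-sided ideals. -/
def Spc : Type (max u v) := {P : ThickIdeal C // P.IsPrime}

/-- The topology on `Spc C` generated by declaring the sets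
`V(S) = {P : P ∩ S = ∅}` to be closed, i.e. their complements
`U(S) = {P : P ∩ S ≠ ∅}` to be open. -/
instance : TopologicalSpace (Spc C) :=
  generateFrom
    {U : Set (Spc C) | ∃ S : Set C, U = {P : Spc C | (P.1.carrier ∩ S).Nonempty}}

/-- The small noncommutative support of an object. -/
def supp (t : C) : Set (Spc C) := {P : Spc C | t ∉ P.1.carrier}

/-- The support of a collection of objects. -/
def suppSet (E : Set C) : Set (Spc C) := ⋃ t ∈ E, supp C t

/-- A Thomason subset: a union of closed subsets with quasi-compact complements. -/
def IsThomason (Y : Set (Spc C)) : Prop :=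
  ∃ 𝒴 : Set (Set (Spc C)), Y = ⋃₀ 𝒴 ∧ ∀ Z ∈ 𝒴, IsClosed Z ∧ IsCompact Zᶜ

/-- A support datum on `C` with values in the topological space `X`. -/
structure SupportDatum (X : Type*) [TopologicalSpace X] where
  σ : C → Set X
  isClosed_σ : ∀ t : C, IsClosed (σ t)
  σ_zero : σ 0 = ∅
  σ_unit : σ (𝟙_ C) = Set.univ
  σ_sum : ∀ a b : C, σ (a ⊞ b) = σ a ∪ σ b
  σ_shift : ∀ a : C, σ (a⟦(1 : ℤ)⟧) = σ a
  σ_triangle : ∀ T : Triangle C, (T ∈ distTriang C) →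
    σ T.obj₁ ⊆ σ T.obj₂ ∪ σ T.obj₃
  σ_tensor : ∀ a b : C, (⋃ c : C, σ (a ⊗ c ⊗ b)) = σ a ∩ σ b

/-- A specialisation closed subset: a union of closed subsets. -/
def IsSpecClosed {X : Type*} [TopologicalSpace X] (Y : Set X) : Prop :=
  ∃ 𝒴 : Set (Set X), Y = ⋃₀ 𝒴 ∧ ∀ Z ∈ 𝒴, IsClosed Z

/-- A classifying support datum: the space `X` is noetherian and spectral, and
`Θ(Y) = {t : σ(t) ⊆ Y}` is a bijection from specialisation closed subsets of `X`
to thick two-sided semiprime ideals of `C`, with inverse `J ↦ ⋃_{j ∈ J} σ(j)`. -/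
structure ClassifyingSupportDatum (X : Type*) [TopologicalSpace X]
    extends SupportDatum C X where
  noetherian : NoetherianSpace X
  compact : CompactSpace X
  t0 : T0Space X
  basis : IsTopologicalBasis {U : Set X | IsOpen U ∧ IsCompact U}
  qc_inter : ∀ U V : Set X, IsOpen U → IsCompact U → IsOpen V → IsCompact V →
    IsCompact (U ∩ V)
  sober : QuasiSober X
  theta_semiprime : ∀ Y : Set X, IsSpecClosed Y →
    ∃ J : ThickIdeal C, J.IsSemiprime ∧ J.carrier = {t : C | σ t ⊆ Y}
  theta_leftInv : ∀ Y : Set X, IsSpecClosed Y →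
    (⋃ t ∈ {t : C | σ t ⊆ Y}, σ t) = Y
  sigma_specClosed : ∀ J : ThickIdeal C, J.IsSemiprime →
    IsSpecClosed (⋃ j ∈ J.carrier, σ j)
  theta_rightInv : ∀ J : ThickIdeal C, J.IsSemiprime →
    {t : C | σ t ⊆ ⋃ j ∈ J.carrier, σ j} = J.carrier

/-- The alternating tensor product `r 0 ⊗ c 0 ⊗ r 1 ⊗ c 1 ⊗ ⋯ ⊗ c (n-1) ⊗ r n`. -/
def altTensor : ∀ (n : ℕ), (Fin (n + 1) → C) → (Fin n → C) → C
  | 0, r, _ => r 0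
  | n + 1, r, c =>
      altTensor n (fun i => r i.castSucc) (fun i => c i.castSucc) ⊗
        (c (Fin.last n) ⊗ r (Fin.last (n + 1)))

/-!
A prime `P` satisfies the elementwise primality `(∀ c, a ⊗ c ⊗ b ∈ P) → a ∈ P ∨ b ∈ P`: apply
primeness to `J = {y | a ⊗ C ⊗ y ⊆ P}` and `I = {x | x ⊗ J ⊆ P}`, which contain `b` and `a`.
Hence `supp a ∩ supp b = ⋃_c supp (a ⊗ c ⊗ b)`, so every finite intersection of supports is a
union of supports. The complements of supports form a basis of the spectrum, so a closed set with
quasi-compact complement is a finite intersection of supports; thus a Thomason subset `Y` is a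
union of supports, i.e. `Y = supp T_Y`. On the other side `T_Y` is the intersection of the primes
outside `Y`, hence semiprime, and a semiprime `J = ⋂ Q` is recovered as `T_{supp J}`. Finally,
in a noetherian space every open set is quasi-compact, so `supp J = ⋃_{t ∈ J} supp t` is Thomason.
-/

section

variable {D : Type*} [Category D] [HasZeroObject D] [Preadditive D] [HasShift D ℤ]
  [∀ n : ℤ, (shiftFunctor D n).Additive] [Pretriangulated D] [HasBinaryBiproducts D]
  [MonoidalCategory D]

namespace ThickIdeal

@[ext]
lemma ext {I J : ThickIdeal D} (h : I.carrier = J.carrier) : I = J := by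
  cases I; cases J; cases h; rfl

instance : InfSet (ThickIdeal D) where
  sInf S :=
    { carrier := ⋂ P ∈ S, P.carrier
      zero_mem := Set.mem_iInter₂.2 fun P _ => P.zero_mem
      iso_closed := fun e ha => Set.mem_iInter₂.2 fun P hP =>
        P.iso_closed e (Set.mem_iInter₂.1 ha P hP)
      shift_mem := fun a n ha => Set.mem_iInter₂.2 fun P hP =>
        P.shift_mem a n (Set.mem_iInter₂.1 ha P hP)
      ext₂ := fun T hT h₁ h₃ => Set.mem_iInter₂.2 fun P hP =>
        P.ext₂ T hT (Set.mem_iInter₂.1 h₁ P hP) (Set.mem_iInter₂.1 h₃ P hP)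
      summand_mem := fun a b h => Set.mem_iInter₂.2 fun P hP =>
        P.summand_mem a b (Set.mem_iInter₂.1 h P hP)
      tensor_left_mem := fun a x ha => Set.mem_iInter₂.2 fun P hP =>
        P.tensor_left_mem a x (Set.mem_iInter₂.1 ha P hP)
      tensor_right_mem := fun a x ha => Set.mem_iInter₂.2 fun P hP =>
        P.tensor_right_mem a x (Set.mem_iInter₂.1 ha P hP) }

@[simp]
lemma carrier_sInf (S : Set (ThickIdeal D)) : (sInf S).carrier = ⋂ P ∈ S, P.carrier := rfl

lemma isSemiprime_sInf {S : Set (ThickIdeal D)} (hS : ∀ P ∈ S, P.IsPrime) :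
    (sInf S).IsSemiprime :=
  ⟨S, hS, rfl⟩

end ThickIdeal

lemma setOf_inter_nonempty_eq_iUnion_compl_supp (S : Set D) :
    {P : Spc D | (P.1.carrier ∩ S).Nonempty} = ⋃ t ∈ S, (supp D t)ᶜ := by
  ext P
  simp [supp, Set.Nonempty, and_comm]

lemma isOpen_compl_supp (t : D) : IsOpen (supp D t)ᶜ := by
  have h : IsOpen {P : Spc D | (P.1.carrier ∩ {t}).Nonempty} :=
    isOpen_generateFrom_of_mem ⟨{t}, rfl⟩
  rwa [setOf_inter_nonempty_eq_iUnion_compl_supp, Set.biUnion_singleton] at h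

lemma isClosed_supp (t : D) : IsClosed (supp D t) :=
  ⟨isOpen_compl_supp t⟩

lemma supp_zero : supp D (0 : D) = ∅ := by
  ext P
  simp [supp, P.1.zero_mem]

lemma supp_biprod (a b : D) : supp D (a ⊞ b) = supp D a ∪ supp D b := by
  ext P
  have hmem : (a ⊞ b) ∈ P.1.carrier ↔ a ∈ P.1.carrier ∧ b ∈ P.1.carrier :=
    ⟨fun h => ⟨P.1.summand_mem a b h, P.1.summand_mem b a (P.1.iso_closed (biprod.braiding a b) h)⟩,
      fun h => P.1.ext₂ _ (binaryBiproductTriangle_distinguished a b) h.1 h.2⟩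
  simp only [supp, Set.mem_union, Set.mem_ofPred_eq, hmem]
  tauto

lemma isTopologicalBasis_compl_supp : IsTopologicalBasis (Set.range fun t : D => (supp D t)ᶜ) where
  exists_subset_inter := by
    rintro _ ⟨a, rfl⟩ _ ⟨b, rfl⟩ P hP
    have h : (supp D (a ⊞ b))ᶜ = (supp D a)ᶜ ∩ (supp D b)ᶜ := by
      rw [supp_biprod, Set.compl_union]
    exact ⟨_, ⟨a ⊞ b, rfl⟩, h.superset hP, h.subset⟩
  sUnion_eq := Set.eq_univ_of_forall fun P => ⟨_, ⟨0, rfl⟩, by simp [supp_zero]⟩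
  eq_generateFrom := by
    refine le_antisymm (le_generateFrom ?_) (le_generateFrom ?_)
    · rintro _ ⟨t, rfl⟩
      exact isOpen_compl_supp t
    · rintro _ ⟨S, rfl⟩
      rw [setOf_inter_nonempty_eq_iUnion_compl_supp]
      exact @isOpen_biUnion _ _ (generateFrom _) _ _ fun t _ => isOpen_generateFrom_of_mem ⟨t, rfl⟩

lemma exists_finite_eq_biInter_supp {Z : Set (Spc D)} (hZ : IsClosed Z) (hZc : IsCompact Zᶜ) :
    ∃ F : Set D, F.Finite ∧ Z = ⋂ t ∈ F, supp D t := by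
  obtain ⟨F, hF, hZF⟩ := eq_finite_iUnion_of_isTopologicalBasis_of_isCompact_open _
    isTopologicalBasis_compl_supp Zᶜ hZc hZ.isOpen_compl
  refine ⟨F, hF, ?_⟩
  rw [← compl_compl Z, hZF]
  simp

def supportedIn (Y : Set (Spc D)) : ThickIdeal D :=
  sInf (Subtype.val '' Yᶜ)

lemma carrier_supportedIn (Y : Set (Spc D)) :
    (supportedIn Y).carrier = {t : D | supp D t ⊆ Y} := by
  ext t
  simp only [supportedIn, ThickIdeal.carrier_sInf, Set.mem_iInter, Set.mem_image]
  constructor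
  · intro h P hP
    by_contra hPY
    exact hP (h P.1 ⟨P, hPY, rfl⟩)
  · rintro h _ ⟨P, hPY, rfl⟩
    by_contra hP
    exact hPY (h hP)

lemma isSemiprime_supportedIn (Y : Set (Spc D)) : (supportedIn Y).IsSemiprime :=
  ThickIdeal.isSemiprime_sInf <| by
    rintro _ ⟨P, -, rfl⟩
    exact P.2

lemma suppSet_supportedIn_subset (Y : Set (Spc D)) : suppSet D (supportedIn Y).carrier ⊆ Y := by
  rw [carrier_supportedIn]
  exact Set.iUnion₂_subset fun _ ht => ht

lemma ThickIdeal.IsSemiprime.supportedIn_suppSet {J : ThickIdeal D} (hJ : J.IsSemiprime) :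
    supportedIn (suppSet D J.carrier) = J := by
  obtain ⟨S, hS, hJS⟩ := hJ
  ext t
  rw [carrier_supportedIn]
  refine ⟨fun ht => ?_, fun ht P hPt => Set.mem_biUnion ht hPt⟩
  rw [hJS, Set.mem_iInter₂]
  intro Q hQ
  by_contra hQt
  obtain ⟨j, hj, hQj⟩ := Set.mem_iUnion₂.1 (@ht ⟨Q, hS Q hQ⟩ hQt)
  rw [hJS] at hj
  exact hQj (Set.mem_iInter₂.1 hj Q hQ)

lemma isThomason_suppSet [NoetherianSpace (Spc D)] (E : Set D) : IsThomason D (suppSet D E) :=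
  ⟨supp D '' E, by simp [suppSet, Set.sUnion_image], by
    rintro _ ⟨t, -, rfl⟩
    exact ⟨isClosed_supp t, NoetherianSpace.isCompact _⟩⟩

variable [∀ X : D, (tensorLeft X).CommShift ℤ] [∀ X : D, (tensorRight X).CommShift ℤ]
  [∀ X : D, (tensorLeft X).IsTriangulated] [∀ X : D, (tensorRight X).IsTriangulated]

instance (F : D ⥤ D) [F.Additive] : PreservesBinaryBiproducts F :=
  preservesBinaryBiproducts_of_preservesBiproducts F

namespace ThickIdeal

def leftColon (P J : ThickIdeal D) : ThickIdeal D where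
  carrier := {x : D | ∀ y ∈ J.carrier, x ⊗ y ∈ P.carrier}
  zero_mem := fun y _ => P.iso_closed (tensorRight y).mapZeroObject.symm P.zero_mem
  iso_closed := fun e hx y hy => P.iso_closed ((tensorRight y).mapIso e) (hx y hy)
  shift_mem := fun x n hx y hy =>
    P.iso_closed (((tensorRight y).commShiftIso n).app x).symm (P.shift_mem _ n (hx y hy))
  ext₂ := fun T hT h₁ h₃ y hy =>
    P.ext₂ ((tensorRight y).mapTriangle.obj T) ((tensorRight y).map_distinguished T hT)
      (h₁ y hy) (h₃ y hy)
  summand_mem := fun x x' h y hy =>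
    P.summand_mem _ _ (P.iso_closed ((tensorRight y).mapBiprod x x') (h y hy))
  tensor_left_mem := fun x c hx y hy =>
    P.iso_closed (α_ c x y).symm (P.tensor_left_mem _ c (hx y hy))
  tensor_right_mem := fun x c hx y hy =>
    P.iso_closed (α_ x c y).symm (hx _ (J.tensor_left_mem y c hy))

def rightColon (P : ThickIdeal D) (a : D) : ThickIdeal D where
  carrier := {y : D | ∀ c : D, a ⊗ c ⊗ y ∈ P.carrier}
  zero_mem := fun c =>
    P.iso_closed ((tensorLeft a).mapIso (tensorLeft c).mapZeroObject ≪≫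
      (tensorLeft a).mapZeroObject).symm P.zero_mem
  iso_closed := fun e hy c => P.iso_closed ((tensorLeft a).mapIso ((tensorLeft c).mapIso e)) (hy c)
  shift_mem := fun y n hy c =>
    P.iso_closed
      (((tensorLeft a).mapIso (((tensorLeft c).commShiftIso n).app y) ≪≫
        ((tensorLeft a).commShiftIso n).app (c ⊗ y)).symm)
      (P.shift_mem _ n (hy c))
  ext₂ := fun T hT h₁ h₃ c =>
    P.ext₂ ((tensorLeft c ⋙ tensorLeft a).mapTriangle.obj T)
      ((tensorLeft c ⋙ tensorLeft a).map_distinguished T hT) (h₁ c) (h₃ c)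
  summand_mem := fun y y' h c =>
    P.summand_mem _ _ (P.iso_closed ((tensorLeft c ⋙ tensorLeft a).mapBiprod y y') (h c))
  tensor_left_mem := fun y x hy c => P.iso_closed ((tensorLeft a).mapIso (α_ c x y)) (hy (c ⊗ x))
  tensor_right_mem := fun y x hy c =>
    P.iso_closed (α_ a (c ⊗ y) x ≪≫ (tensorLeft a).mapIso (α_ c y x))
      (P.tensor_right_mem _ x (hy c))

lemma IsPrime.mem_or_mem_of_forall_tensor_mem {P : ThickIdeal D} (hP : P.IsPrime) {a b : D}
    (h : ∀ c : D, a ⊗ c ⊗ b ∈ P.carrier) : a ∈ P.carrier ∨ b ∈ P.carrier := by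
  have ha : a ∈ (P.leftColon (P.rightColon a)).carrier := fun y hy =>
    P.iso_closed ((tensorLeft a).mapIso (λ_ y)) (hy (𝟙_ D))
  exact (hP.2 (P.leftColon (P.rightColon a)) (P.rightColon a) fun x hx y hy => hx y hy).imp
    (· ha) (· h)

end ThickIdeal

lemma supp_inter_supp (a b : D) : supp D a ∩ supp D b = ⋃ c : D, supp D (a ⊗ c ⊗ b) := by
  ext P
  simp only [supp, Set.mem_inter_iff, Set.mem_iUnion, Set.mem_ofPred_eq]
  constructor
  · rintro ⟨ha, hb⟩
    by_contra! h
    exact (P.2.mem_or_mem_of_forall_tensor_mem h).elim ha hb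
  · rintro ⟨c, hc⟩
    exact ⟨fun ha => hc (P.1.tensor_right_mem a _ ha),
      fun hb => hc (P.1.tensor_left_mem _ a (P.1.tensor_left_mem b c hb))⟩

lemma exists_mem_supp_subset_biInter_supp {F : Set D} (hF : F.Finite) {P : Spc D}
    (hP : P ∈ ⋂ t ∈ F, supp D t) : ∃ u : D, P ∈ supp D u ∧ supp D u ⊆ ⋂ t ∈ F, supp D t := by
  induction F, hF using Set.Finite.induction_on with
  | empty =>
    obtain ⟨u, hu⟩ := Set.ne_univ_iff_exists_notMem _ |>.1 P.2.1
    exact ⟨u, hu, by simp⟩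
  | @insert a F _ _ ih =>
    rw [Set.biInter_insert] at hP ⊢
    obtain ⟨u, hPu, hu⟩ := ih hP.2
    obtain ⟨c, hc⟩ := Set.mem_iUnion.1 ((supp_inter_supp a u).le ⟨hP.1, hPu⟩)
    refine ⟨a ⊗ c ⊗ u, hc, fun Q hQ => ?_⟩
    have hQ' := (supp_inter_supp a u).ge (Set.mem_iUnion.2 ⟨c, hQ⟩)
    exact ⟨hQ'.1, hu hQ'.2⟩

lemma IsThomason.suppSet_supportedIn {Y : Set (Spc D)} (hY : IsThomason D Y) :
    suppSet D (supportedIn Y).carrier = Y := by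
  refine (suppSet_supportedIn_subset Y).antisymm fun P hPY => ?_
  obtain ⟨𝒴, rfl, h𝒴⟩ := hY
  obtain ⟨Z, hZ, hPZ⟩ := hPY
  obtain ⟨F, hF, rfl⟩ := exists_finite_eq_biInter_supp (h𝒴 _ hZ).1 (h𝒴 _ hZ).2
  obtain ⟨u, hPu, hu⟩ := exists_mem_supp_subset_biInter_supp hF hPZ
  refine Set.mem_biUnion (x := u) ?_ hPu
  rw [carrier_supportedIn]
  exact hu.trans (Set.subset_sUnion_of_mem hZ)

end

/-- If `Spc C` is noetherian, then `Y ↦ T_Y = {t : supp t ⊆ Y}` is an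
inclusion-preserving bijection from Thomason subsets of `Spc C` to thick
two-sided semiprime ideals of `C`, with inverse `J ↦ supp J`. -/
theorem statement1 (noeth : NoetherianSpace (Spc C)) :
    ∃ e : {Y : Set (Spc C) // IsThomason C Y} ≃ {J : ThickIdeal C // J.IsSemiprime},
      (∀ Y₁ Y₂ : {Y : Set (Spc C) // IsThomason C Y},
        Y₁.1 ⊆ Y₂.1 ↔ (e Y₁).1.carrier ⊆ (e Y₂).1.carrier) ∧
      (∀ Y : {Y : Set (Spc C) // IsThomason C Y},
        (e Y).1.carrier = {t : C | supp C t ⊆ Y.1}) ∧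
      (∀ J : {J : ThickIdeal C // J.IsSemiprime},
        (e.symm J).1 = suppSet C J.1.carrier) := by
  let e : {Y : Set (Spc C) // IsThomason C Y} ≃ {J : ThickIdeal C // J.IsSemiprime} :=
    { toFun := fun Y => ⟨supportedIn Y.1, isSemiprime_supportedIn Y.1⟩
      invFun := fun J => ⟨suppSet C J.1.carrier, isThomason_suppSet _⟩
      left_inv := fun Y => Subtype.ext Y.2.suppSet_supportedIn
      right_inv := fun J => Subtype.ext J.2.supportedIn_suppSet }
  refine ⟨e, fun Y₁ Y₂ => ⟨fun h => ?_, fun h => ?_⟩, fun Y => carrier_supportedIn Y.1,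
    fun J => rfl⟩
  · change (supportedIn Y₁.1).carrier ⊆ (supportedIn Y₂.1).carrier
    rw [carrier_supportedIn, carrier_supportedIn]
    exact fun t ht => ht.trans h
  · rw [← Y₁.2.suppSet_supportedIn, ← Y₂.2.suppSet_supportedIn]
    exact Set.biUnion_subset_biUnion_left h
end

section
/- Let (X, σ) be a support datum on an essentially small monoidal triangulated category T. Then for any finite collection of objects r_1, r_2, ..., r_n of T, the intersection ∩_{i=1}^{n} σ(r_i) equals the union over all objects c_1, ..., c_{n-1} of T of σ(r_1 ⊗ c_1 ⊗ r_2 ⊗ c_2 ⊗ ··· ⊗ c_{n-1} ⊗ r_n). -/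
open CategoryTheory CategoryTheory.Limits CategoryTheory.Pretriangulated
  CategoryTheory.MonoidalCategory TopologicalSpace ZeroObject

universe v u

variable (C : Type u) [Category.{v} C] [HasZeroObject C] [Preadditive C]
  [HasShift C ℤ] [∀ n : ℤ, (shiftFunctor C n).Additive] [Pretriangulated C]
  [HasBinaryBiproducts C] [MonoidalCategory C] [EssentiallySmall.{v} C]
  [∀ X : C, (tensorLeft X).CommShift ℤ] [∀ X : C, (tensorRight X).CommShift ℤ]
  [∀ X : C, (tensorLeft X).IsTriangulated] [∀ X : C, (tensorRight X).IsTriangulated]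

/-- For a support datum `(X, σ)` and objects `r 0, …, r n`, the intersection
`⋂ σ(r i)` equals the union over all `c 0, …, c (n-1)` of
`σ(r 0 ⊗ c 0 ⊗ r 1 ⊗ ⋯ ⊗ c (n-1) ⊗ r n)`. -/
theorem statement3 {X : Type*} [TopologicalSpace X] (D : SupportDatum C X)
    (n : ℕ) (r : Fin (n + 1) → C) :
    (⋂ i, D.σ (r i)) = ⋃ c : Fin n → C, D.σ (altTensor C n r c) := by
  induction n with
  | zero =>
    ext x
    simp only [Set.mem_iInter, Set.mem_iUnion, altTensor]
    exact ⟨fun h => ⟨Fin.elim0, h 0⟩, fun ⟨c, hc⟩ i => by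
      have : i = 0 := Fin.ext (by omega)
      subst this; exact hc⟩
  | succ n ih =>
    have h1 : (⋂ i, D.σ (r i)) =
        (⋂ i : Fin (n+1), D.σ (r i.castSucc)) ∩ D.σ (r (Fin.last (n+1))) := by
      ext x
      simp only [Set.mem_iInter, Set.mem_inter_iff]
      constructor
      · intro h; exact ⟨fun i => h _, h _⟩
      · rintro ⟨ha, hb⟩ i
        induction i using Fin.lastCases with
        | last => exact hb
        | cast j => exact ha j
    rw [h1, ih (fun i => r i.castSucc), Set.iUnion_inter]
    have h2 : ∀ c' : Fin n → C,
        D.σ (altTensor C n (fun i => r i.castSucc) c') ∩ D.σ (r (Fin.last (n+1)))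
        = ⋃ c0 : C, D.σ (altTensor C n (fun i => r i.castSucc) c' ⊗
            (c0 ⊗ r (Fin.last (n+1)))) := fun c' =>
      (D.σ_tensor (altTensor C n (fun i => r i.castSucc) c') (r (Fin.last (n+1)))).symm
    ext x
    simp only [Set.mem_iUnion, h2]
    constructor
    · rintro ⟨c', c0, hx⟩
      refine ⟨Fin.snoc c' c0, ?_⟩
      show x ∈ D.σ (altTensor C (n+1) r (Fin.snoc c' c0))
      simp only [altTensor, Fin.snoc_castSucc, Fin.snoc_last]
      exact hx
    · rintro ⟨c, hx⟩
      exact ⟨fun i => c i.castSucc, c (Fin.last n), hx⟩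
end

section
/- Let (X, σ) be a classifying support datum on an essentially small monoidal triangulated category T. Then every closed subset Z ⊆ X is of the form Z = σ(t) for some object t ∈ T. -/
open CategoryTheory CategoryTheory.Limits CategoryTheory.Pretriangulated
  CategoryTheory.MonoidalCategory TopologicalSpace ZeroObject

universe v u

variable (C : Type u) [Category.{v} C] [HasZeroObject C] [Preadditive C]
  [HasShift C ℤ] [∀ n : ℤ, (shiftFunctor C n).Additive] [Pretriangulated C]
  [HasBinaryBiproducts C] [MonoidalCategory C] [EssentiallySmall.{v} C]
  [∀ X : C, (tensorLeft X).CommShift ℤ] [∀ X : C, (tensorRight X).CommShift ℤ]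
  [∀ X : C, (tensorLeft X).IsTriangulated] [∀ X : C, (tensorRight X).IsTriangulated]

/-!
Since `X` is noetherian, a closed `Z` is a finite union of irreducible closed sets, and
supports are closed under finite unions (`σ(a ⊕ b) = σ a ∪ σ b`). An irreducible closed `W`
has a generic point `x` by sobriety; as `W = ⋃ {σ t | σ t ⊆ W}`, some `σ t ⊆ W` contains `x`,
hence contains `closure {x} = W`.
-/

namespace SupportDatum

variable {C} {X : Type*} [TopologicalSpace X]

theorem sUnion_mem_range_σ (S : SupportDatum C X) {𝒮 : Set (Set X)} (h𝒮 : 𝒮.Finite)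
    (h𝒮σ : 𝒮 ⊆ Set.range S.σ) : ⋃₀ 𝒮 ∈ Set.range S.σ := by
  induction 𝒮, h𝒮 using Set.Finite.induction_on with
  | empty => exact ⟨0, by rw [S.σ_zero, Set.sUnion_empty]⟩
  | @insert W 𝒮 _ _ ih =>
    obtain ⟨a, ha⟩ := h𝒮σ (Set.mem_insert W 𝒮)
    obtain ⟨b, hb⟩ := ih ((Set.subset_insert W 𝒮).trans h𝒮σ)
    exact ⟨a ⊞ b, by rw [S.σ_sum, ha, hb, Set.sUnion_insert]⟩

end SupportDatum

namespace ClassifyingSupportDatum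

variable {C} {X : Type*} [TopologicalSpace X]

theorem exists_mem_σ_subset (D : ClassifyingSupportDatum C X) {W : Set X} (hW : IsClosed W)
    {x : X} (hx : x ∈ W) : ∃ t : C, x ∈ D.σ t ∧ D.σ t ⊆ W := by
  rw [← D.theta_leftInv W ⟨{W}, (Set.sUnion_singleton W).symm, by simpa using hW⟩] at hx
  obtain ⟨t, htW, hxt⟩ := Set.mem_iUnion₂.1 hx
  exact ⟨t, hxt, htW⟩

theorem mem_range_σ_of_isIrreducible [QuasiSober X] (D : ClassifyingSupportDatum C X)
    {W : Set X} (hW : IsClosed W) (hWirr : IsIrreducible W) : W ∈ Set.range D.σ := by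
  obtain ⟨x, hx⟩ := QuasiSober.sober hWirr hW
  obtain ⟨t, hxt, htW⟩ := D.exists_mem_σ_subset hW hx.mem
  refine ⟨t, htW.antisymm ?_⟩
  rw [← hx.def]
  exact (D.isClosed_σ t).closure_subset_iff.2 (Set.singleton_subset_iff.2 hxt)

end ClassifyingSupportDatum

/-- For a classifying support datum `(X, σ)`, every closed subset `Z ⊆ X` is
of the form `σ(t)` for some object `t`. -/
theorem statement12 {X : Type*} [TopologicalSpace X]
    (D : ClassifyingSupportDatum C X) (Z : Set X) (hZ : IsClosed Z) :
    ∃ t : C, D.σ t = Z := by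
  have := D.noetherian
  have := D.sober
  obtain ⟨𝒮, h𝒮, h𝒮closed, h𝒮irr, rfl⟩ :=
    NoetherianSpace.exists_finite_set_isClosed_irreducible hZ
  exact D.sUnion_mem_range_σ h𝒮 fun W hW =>
    D.mem_range_σ_of_isIrreducible (h𝒮closed W hW) (h𝒮irr W hW)
end

section
/- Let (X, σ) be a classifying support datum on an essentially small monoidal triangulated category T. Then the universal map f_σ : X → Spc(T), defined by f_σ(x) = {t ∈ T : x ∉ σ(t)}, is injective. -/
open CategoryTheory CategoryTheory.Limits CategoryTheory.Pretriangulated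
  CategoryTheory.MonoidalCategory TopologicalSpace ZeroObject

universe v u

variable (C : Type u) [Category.{v} C] [HasZeroObject C] [Preadditive C]
  [HasShift C ℤ] [∀ n : ℤ, (shiftFunctor C n).Additive] [Pretriangulated C]
  [HasBinaryBiproducts C] [MonoidalCategory C] [EssentiallySmall.{v} C]
  [∀ X : C, (tensorLeft X).CommShift ℤ] [∀ X : C, (tensorRight X).CommShift ℤ]
  [∀ X : C, (tensorLeft X).IsTriangulated] [∀ X : C, (tensorRight X).IsTriangulated]

/-- For a classifying support datum `(X, σ)`, the universal map
`f_σ : X → Spc C`, `f_σ(x) = {t : x ∉ σ(t)}`, is injective. -/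
theorem statement14 {X : Type*} [TopologicalSpace X]
    (D : ClassifyingSupportDatum C X) (f : X → Spc C)
    (hf : ∀ x : X, (f x).1.carrier = {t : C | x ∉ D.σ t}) :
    Function.Injective f := by
  intro x y hxy
  haveI := D.t0
  have hset : {t : C | x ∉ D.σ t} = {t : C | y ∉ D.σ t} := by
    rw [← hf x, ← hf y, hxy]
  have hiff : ∀ t : C, x ∈ D.σ t ↔ y ∈ D.σ t := by
    intro t
    have := Set.ext_iff.mp hset t
    simp only [Set.mem_setOf_eq] at this
    tauto
  have key : ∀ a b : X, (∀ t : C, a ∈ D.σ t ↔ b ∈ D.σ t) → b ∈ closure {a} := by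
    intro a b h
    have hsc : IsSpecClosed (closure ({a} : Set X)) :=
      ⟨{closure {a}}, by simp, by simp [isClosed_closure]⟩
    have hInv := D.theta_leftInv _ hsc
    have hax : a ∈ closure ({a} : Set X) := subset_closure rfl
    rw [← hInv] at hax
    obtain ⟨t, ht, hat⟩ := Set.mem_iUnion₂.mp hax
    exact ht ((h t).mp hat)
  have h1 : y ∈ closure ({x} : Set X) := key x y hiff
  have h2 : x ∈ closure ({y} : Set X) := key y x (fun t => (hiff t).symm)
  have s1 : x ⤳ y := specializes_iff_mem_closure.mpr h1
  have s2 : y ⤳ x := specializes_iff_mem_closure.mpr h2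
  exact (s1.antisymm s2).eq
end

section
/- Let (X, σ) be a classifying support datum on an essentially small monoidal triangulated category T. Then the universal map f_σ : X → Spc(T), defined by f_σ(x) = {t ∈ T : x ∉ σ(t)}, is surjective. -/
open CategoryTheory CategoryTheory.Limits CategoryTheory.Pretriangulated
  CategoryTheory.MonoidalCategory TopologicalSpace ZeroObject

universe v u

variable (C : Type u) [Category.{v} C] [HasZeroObject C] [Preadditive C]
  [HasShift C ℤ] [∀ n : ℤ, (shiftFunctor C n).Additive] [Pretriangulated C]
  [HasBinaryBiproducts C] [MonoidalCategory C] [EssentiallySmall.{v} C]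
  [∀ X : C, (tensorLeft X).CommShift ℤ] [∀ X : C, (tensorRight X).CommShift ℤ]
  [∀ X : C, (tensorLeft X).IsTriangulated] [∀ X : C, (tensorRight X).IsTriangulated]

/-!
A prime `P` is semiprime, so it is recovered from its support: `P = {t | σ t ⊆ σ(P)}`.
Since `X` is noetherian, there is `s ∉ P` whose support `σ s` is minimal among supports of
objects outside `P`. Primality makes `σ s` the least such support: for `t ∉ P` some `s ⊗ c ⊗ t`
lies outside `P`, and its support lies in `σ s ∩ σ t`, so by minimality it equals `σ s`.
Any point `x ∈ σ s` outside `σ(P)`, which exists because `s ∉ P`, then satisfies `f x = P`.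
-/

namespace ThickIdeal

variable {C}

theorem carrier_injective : Function.Injective (carrier : ThickIdeal C → Set C) := by
  rintro ⟨⟩ ⟨⟩ h
  cases h
  rfl

section Pullback

variable (P : ThickIdeal C) (F : C ⥤ C)

theorem obj_zero_mem [F.Additive] : F.obj 0 ∈ P.carrier :=
  P.iso_closed F.mapZeroObject.symm P.zero_mem

theorem obj_shift_mem [F.CommShift ℤ] {t : C} (n : ℤ) (h : F.obj t ∈ P.carrier) :
    F.obj (t⟦n⟧) ∈ P.carrier :=
  P.iso_closed ((F.commShiftIso n).app t).symm (P.shift_mem _ n h)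

theorem obj_ext₂ [F.CommShift ℤ] [F.IsTriangulated] (T : Triangle C) (hT : T ∈ distTriang C)
    (h₁ : F.obj T.obj₁ ∈ P.carrier) (h₃ : F.obj T.obj₃ ∈ P.carrier) :
    F.obj T.obj₂ ∈ P.carrier :=
  P.ext₂ (F.mapTriangle.obj T) (F.map_distinguished T hT) h₁ h₃

theorem obj_summand_mem [F.Additive] {a b : C} (h : F.obj (a ⊞ b) ∈ P.carrier) :
    F.obj a ∈ P.carrier := by
  have : PreservesBinaryBiproducts F := preservesBinaryBiproducts_of_preservesBiproducts F
  exact P.summand_mem _ (F.obj b) (P.iso_closed (F.mapBiprod a b) h)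

end Pullback

def principal (a : C) : ThickIdeal C where
  carrier := ⋂ I : {I : ThickIdeal C // a ∈ I.carrier}, I.1.carrier
  zero_mem := Set.mem_iInter.2 fun I => I.1.zero_mem
  iso_closed e h := Set.mem_iInter.2 fun I => I.1.iso_closed e (Set.mem_iInter.1 h I)
  shift_mem b n h := Set.mem_iInter.2 fun I => I.1.shift_mem b n (Set.mem_iInter.1 h I)
  ext₂ T hT h₁ h₃ := Set.mem_iInter.2 fun I =>
    I.1.ext₂ T hT (Set.mem_iInter.1 h₁ I) (Set.mem_iInter.1 h₃ I)
  summand_mem x y h := Set.mem_iInter.2 fun I => I.1.summand_mem x y (Set.mem_iInter.1 h I)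
  tensor_left_mem b x h :=
    Set.mem_iInter.2 fun I => I.1.tensor_left_mem b x (Set.mem_iInter.1 h I)
  tensor_right_mem b x h :=
    Set.mem_iInter.2 fun I => I.1.tensor_right_mem b x (Set.mem_iInter.1 h I)

theorem mem_principal_self (a : C) : a ∈ (principal a).carrier :=
  Set.mem_iInter.2 fun I => I.2

theorem principal_subset {a : C} {I : ThickIdeal C} (h : a ∈ I.carrier) :
    (principal a).carrier ⊆ I.carrier :=
  fun _ ht => Set.mem_iInter.1 ht ⟨I, h⟩

def colonObj (P : ThickIdeal C) (a : C) : ThickIdeal C where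
  carrier := {j | ∀ c : C, (a ⊗ c ⊗ j) ∈ P.carrier}
  zero_mem c := P.obj_zero_mem (tensorLeft c ⋙ tensorLeft a)
  iso_closed e h c := P.iso_closed ((tensorLeft c ⋙ tensorLeft a).mapIso e) (h c)
  shift_mem _ n h c := P.obj_shift_mem (tensorLeft c ⋙ tensorLeft a) n (h c)
  ext₂ T hT h₁ h₃ c := P.obj_ext₂ (tensorLeft c ⋙ tensorLeft a) T hT (h₁ c) (h₃ c)
  summand_mem _ _ h c := P.obj_summand_mem (tensorLeft c ⋙ tensorLeft a) (h c)
  tensor_left_mem j x h c := P.iso_closed (whiskerLeftIso a (α_ c x j)) (h (c ⊗ x))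
  tensor_right_mem j x h c :=
    P.iso_closed ((α_ a (c ⊗ j) x) ≪≫ whiskerLeftIso a (α_ c j x))
      (P.tensor_right_mem _ x (h c))

def colon (P B : ThickIdeal C) : ThickIdeal C where
  carrier := {i | ∀ j ∈ B.carrier, (i ⊗ j) ∈ P.carrier}
  zero_mem j _ := P.obj_zero_mem (tensorRight j)
  iso_closed e h j hj := P.iso_closed ((tensorRight j).mapIso e) (h j hj)
  shift_mem _ n h j hj := P.obj_shift_mem (tensorRight j) n (h j hj)
  ext₂ T hT h₁ h₃ j hj := P.obj_ext₂ (tensorRight j) T hT (h₁ j hj) (h₃ j hj)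
  summand_mem _ _ h j hj := P.obj_summand_mem (tensorRight j) (h j hj)
  tensor_left_mem i x h j hj := P.iso_closed (α_ x i j).symm (P.tensor_left_mem _ x (h j hj))
  tensor_right_mem i x h j hj :=
    P.iso_closed (α_ i x j).symm (h (x ⊗ j) (B.tensor_left_mem j x hj))

theorem IsProper.unit_not_mem {P : ThickIdeal C} (hP : P.IsProper) : 𝟙_ C ∉ P.carrier :=
  fun h => hP (Set.eq_univ_of_forall fun x => P.iso_closed (ρ_ x) (P.tensor_left_mem _ x h))

theorem IsPrime.isSemiprime {P : ThickIdeal C} (hP : P.IsPrime) : P.IsSemiprime :=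
  ⟨{P}, by simpa using hP, by simp⟩

theorem IsPrime.mem_or_mem {P : ThickIdeal C} (hP : P.IsPrime) {a b : C}
    (h : ∀ c : C, (a ⊗ c ⊗ b) ∈ P.carrier) : a ∈ P.carrier ∨ b ∈ P.carrier := by
  have hb : (principal b).carrier ⊆ (P.colonObj a).carrier := principal_subset h
  have ha : (principal a).carrier ⊆ (P.colon (principal b)).carrier :=
    principal_subset fun j hj => P.iso_closed (whiskerLeftIso a (λ_ j)) (hb hj (𝟙_ C))
  exact (hP.2 _ _ fun i hi j hj => ha hi j hj).imp
    (· (mem_principal_self a)) (· (mem_principal_self b))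

end ThickIdeal

namespace SupportDatum

variable {C} {X : Type*} [TopologicalSpace X] (D : SupportDatum C X)

theorem σ_tensor_subset (a c b : C) : D.σ (a ⊗ c ⊗ b) ⊆ D.σ a ∩ D.σ b :=
  D.σ_tensor a b ▸ Set.subset_iUnion (fun c => D.σ (a ⊗ c ⊗ b)) c

theorem exists_σ_subset_of_not_mem [NoetherianSpace X] {P : ThickIdeal C} (hP : P.IsPrime) :
    ∃ s ∉ P.carrier, ∀ t ∉ P.carrier, D.σ s ⊆ D.σ t := by
  have hwf : WellFounded fun s t : C => D.σ s ⊂ D.σ t :=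
    (InvImage.wf (fun s => (⟨D.σ s, D.isClosed_σ s⟩ : Closeds X)) wellFounded_lt)
  obtain ⟨s, hs, hmin⟩ := hwf.has_min {s | s ∉ P.carrier} ⟨𝟙_ C, hP.1.unit_not_mem⟩
  refine ⟨s, hs, fun t ht => ?_⟩
  obtain ⟨c, hc⟩ : ∃ c : C, (s ⊗ c ⊗ t) ∉ P.carrier := by
    by_contra! hall
    exact (hP.mem_or_mem hall).elim hs ht
  have hsub := D.σ_tensor_subset s c t
  have hs_sub : D.σ s ⊆ D.σ (s ⊗ c ⊗ t) := by
    by_contra hnot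
    exact hmin _ hc ((Set.subset_inter_iff.1 hsub).1.ssubset_of_not_subset hnot)
  exact fun x hx => (hsub (hs_sub hx)).2

end SupportDatum

namespace ClassifyingSupportDatum

variable {C} {X : Type*} [TopologicalSpace X] (D : ClassifyingSupportDatum C X)

theorem exists_mem_σ_not_mem_σ_ideal {J : ThickIdeal C} (hJ : J.IsSemiprime) {s : C}
    (hs : s ∉ J.carrier) : ∃ x ∈ D.σ s, x ∉ ⋃ j ∈ J.carrier, D.σ j := by
  rw [← D.theta_rightInv J hJ] at hs
  exact Set.not_subset.1 hs

end ClassifyingSupportDatum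

/-- For a classifying support datum `(X, σ)`, the universal map
`f_σ : X → Spc C`, `f_σ(x) = {t : x ∉ σ(t)}`, is surjective. -/
theorem statement15 {X : Type*} [TopologicalSpace X]
    (D : ClassifyingSupportDatum C X) (f : X → Spc C)
    (hf : ∀ x : X, (f x).1.carrier = {t : C | x ∉ D.σ t}) :
    Function.Surjective f := by
  rintro ⟨P, hP⟩
  have := D.noetherian
  obtain ⟨s, hs, hleast⟩ := D.exists_σ_subset_of_not_mem hP
  obtain ⟨x, hxs, hxP⟩ := D.exists_mem_σ_not_mem_σ_ideal hP.isSemiprime hs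
  refine ⟨x, Subtype.ext <| ThickIdeal.carrier_injective ?_⟩
  rw [hf x]
  ext t
  refine ⟨fun hxt => ?_, fun ht hxt => hxP (Set.mem_biUnion ht hxt)⟩
  by_contra ht
  exact hxt (hleast t ht hxs)
end
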